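/- arXiv:1703.08979 — 2 statements merged into one kernel-verified Lean document; each statement's English description precedes it below -/
import Mathlib

section
/- Let q ≥ 1 and X = Fin q ⊕ Fin q, and let β be a pairing of X. A transverse pairing τ of X satisfies |τ∘β| = b_R(β) (i.e. achieves the minimum of |τ'∘β| over transverse pairings τ') if and only if both of the following hold: (i) for every x ∈ X such that β x lies on the side opposite to x, one has τ x = β x; and (ii) for every R-side x such that β x is also R-side, one has τ (β x) = β (τ x). -/
/-- Number of cycles (orbits of the generated cyclic group, fixed points included). -/
noncomputable def permCycles {X : Type*} (σ : Equiv.Perm X) : ℕ :=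
  Nat.card (MulAction.orbitRel.Quotient (Subgroup.zpowers σ) X)

/-- The length `|σ| = card X - #σ` of a permutation. -/
noncomputable def permLength {X : Type*} (σ : Equiv.Perm X) : ℕ :=
  Nat.card X - permCycles σ

/-- A pairing of `X` is a fixed-point-free involution of `X`. -/
def IsPairing {X : Type*} (α : Equiv.Perm X) : Prop :=
  α * α = 1 ∧ ∀ x, α x ≠ x

/-- A pairing of `Fin q ⊕ Fin q` is transverse if it sends the L side to the R side. -/
def IsTransverse {q : ℕ} (τ : Equiv.Perm (Fin q ⊕ Fin q)) : Prop :=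
  ∀ i : Fin q, (τ (Sum.inl i)).isRight

/-- `b_R(β)`: the number of R-side elements paired to R-side elements (twice the
number of bumps of `β`). -/
def bR {q : ℕ} (β : Equiv.Perm (Fin q ⊕ Fin q)) : ℕ :=
  (Finset.univ.filter fun i : Fin q => (β (Sum.inr i)).isRight).card


/-!
Write `σ = τ * β` and call `x` a bump end when `x` and `β x` are both R-side; there are
`b_R(β)` of them. The image under `σ` of a bump end is L-side, so every cycle of `σ` meets the
`2q - b_R(β)` other points, whence `#σ ≤ 2q - b_R(β)`, with equality iff each cycle contains
exactly one point that is not a bump end. Equality forces every `x` with `β x` on the other side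
to be fixed by `σ` (that is (i)), and forces `σ (σ x)` to be a bump end when `x` is one; then
`β (σ x)` and `τ x = σ (β x)` are non-bump ends on the cycle of `β x`, so they coincide, which
is (ii). Conversely (i) and (ii) make `σ` an involution whose 2-cycles each contain a bump end.
-/

open Equiv

section Cycles

variable {X : Type*} {σ : Perm X}

theorem orbitRel_mk_eq_mk_iff_sameCycle {x y : X} :
    (Quotient.mk'' x : MulAction.orbitRel.Quotient (Subgroup.zpowers σ) X) = Quotient.mk'' y ↔
      σ.SameCycle x y := by
  rw [Quotient.eq'', MulAction.orbitRel_apply, MulAction.mem_orbit_iff, Perm.sameCycle_comm]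
  constructor
  · rintro ⟨⟨g, hg⟩, rfl⟩
    obtain ⟨k, rfl⟩ := Subgroup.mem_zpowers_iff.mp hg
    exact ⟨k, rfl⟩
  · rintro ⟨k, rfl⟩
    exact ⟨⟨σ ^ k, k, rfl⟩, rfl⟩

variable (P : X → Prop)

theorem surjective_orbitRel_mk_of_forall_sameCycle (hP : ∀ x, ∃ y, P y ∧ σ.SameCycle x y) :
    Function.Surjective fun x : {x // P x} =>
      (Quotient.mk'' x.1 : MulAction.orbitRel.Quotient (Subgroup.zpowers σ) X) := by
  rintro ⟨x⟩
  obtain ⟨y, hy, hxy⟩ := hP x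
  exact ⟨⟨y, hy⟩, orbitRel_mk_eq_mk_iff_sameCycle.mpr hxy.symm⟩

variable [Finite X]

theorem permCycles_le_card_of_forall_sameCycle (hP : ∀ x, ∃ y, P y ∧ σ.SameCycle x y) :
    permCycles σ ≤ Nat.card {x // P x} :=
  Nat.card_le_card_of_surjective _ (surjective_orbitRel_mk_of_forall_sameCycle P hP)

theorem permCycles_eq_card_iff (hP : ∀ x, ∃ y, P y ∧ σ.SameCycle x y) :
    permCycles σ = Nat.card {x // P x} ↔ ∀ x y, P x → P y → σ.SameCycle x y → x = y := by
  have hsurj := surjective_orbitRel_mk_of_forall_sameCycle P hP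
  have hbij := (Nat.bijective_iff_surjective_and_card _).trans (and_iff_right hsurj)
  rw [permCycles, eq_comm, ← hbij, Function.Bijective, and_iff_left hsurj, Function.Injective]
  simp only [Subtype.forall, Subtype.mk.injEq, orbitRel_mk_eq_mk_iff_sameCycle]
  exact ⟨fun h x y hx hy => h x hx y hy, fun h x hx y hy => h x y hx hy⟩

end Cycles

theorem Equiv.Perm.SameCycle.eq_or_eq_apply_of_involutive {X : Type*} {σ : Perm X}
    (hσ : Function.Involutive σ) {x y : X} (h : σ.SameCycle x y) : y = x ∨ y = σ x := by
  have hσσ : σ ^ 2 = 1 := Equiv.ext hσ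
  obtain ⟨k, rfl⟩ := h
  obtain ⟨n, rfl | rfl⟩ := Int.even_or_odd' k
  · left
    rw [zpow_mul, zpow_two, ← pow_two, hσσ, one_zpow, Perm.one_apply]
  · right
    rw [zpow_add, zpow_mul, zpow_two, ← pow_two, hσσ, one_zpow, one_mul, zpow_one]

section Pairing

variable {X : Type*} {α β τ : Perm X}

theorem IsPairing.involutive (h : IsPairing α) : Function.Involutive α := fun x => by
  simpa using DFunLike.congr_fun h.1 x

theorem IsPairing.mul_apply_eq_self_iff (hτ : IsPairing τ) {x : X} :
    (τ * β) x = x ↔ τ x = β x := by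
  rw [Perm.mul_apply, hτ.involutive.eq_iff, eq_comm]

end Pairing

section Bumps

variable {q : ℕ} {β τ : Perm (Fin q ⊕ Fin q)}

theorem IsTransverse.isRight_apply (hτt : IsTransverse τ) (hτ : IsPairing τ)
    (x : Fin q ⊕ Fin q) : (τ x).isRight = !x.isRight := by
  choose g hg using fun i => Sum.isRight_iff.mp (hτt i)
  have hg_inj : Function.Injective g := fun i j hij =>
    Sum.inl_injective (τ.injective (by rw [hg, hg, hij]))
  rcases x with i | i
  · simp [hτt i]
  · obtain ⟨j, rfl⟩ := Finite.injective_iff_surjective.mp hg_inj i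
    have : τ (Sum.inr (g j)) = Sum.inl j := by rw [← hg, hτ.involutive]
    simp [this]

def IsBumpEnd (β : Perm (Fin q ⊕ Fin q)) (x : Fin q ⊕ Fin q) : Prop :=
  x.isRight ∧ (β x).isRight

theorem card_not_isBumpEnd_add_bR (β : Perm (Fin q ⊕ Fin q)) :
    Nat.card {x // ¬ IsBumpEnd β x} + bR β = 2 * q := by
  classical
  have hbump : Fintype.card {x // IsBumpEnd β x} = bR β := by
    have : Finset.univ.filter (IsBumpEnd β) = (Finset.univ.filter fun i : Fin q =>
        (β (Sum.inr i)).isRight).map ⟨Sum.inr, Sum.inr_injective⟩ := by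
      ext (i | i) <;> simp [IsBumpEnd]
    rw [Fintype.card_subtype, this, Finset.card_map, bR]
  rw [Nat.card_eq_fintype_card, Fintype.card_subtype_compl, ← hbump,
    Nat.sub_add_cancel (Fintype.card_subtype_le _), Fintype.card_sum, Fintype.card_fin, two_mul]

theorem not_isBumpEnd_of_isRight_eq_false {x : Fin q ⊕ Fin q} (hx : x.isRight = false) :
    ¬ IsBumpEnd β x :=
  fun h => Bool.false_ne_true (hx ▸ h.1)

theorem isRight_mul_apply (hτ : IsPairing τ) (hτt : IsTransverse τ) (x : Fin q ⊕ Fin q) :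
    ((τ * β) x).isRight = !(β x).isRight :=
  hτt.isRight_apply hτ (β x)

theorem permLength_mul_eq_bR_iff (hτ : IsPairing τ) (hτt : IsTransverse τ) :
    permLength (τ * β) = bR β ↔
      ∀ x y, ¬ IsBumpEnd β x → ¬ IsBumpEnd β y → (τ * β).SameCycle x y → x = y := by
  have hcover : ∀ x, ∃ y, ¬ IsBumpEnd β y ∧ (τ * β).SameCycle x y := by
    intro x
    by_cases hx : IsBumpEnd β x
    · refine ⟨(τ * β) x, ?_, Perm.sameCycle_apply_right.mpr .rfl⟩
      exact not_isBumpEnd_of_isRight_eq_false (by rw [isRight_mul_apply hτ hτt, hx.2]; rfl)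
    · exact ⟨x, hx, .rfl⟩
  have hle := permCycles_le_card_of_forall_sameCycle _ hcover
  have hcard := card_not_isBumpEnd_add_bR β
  rw [← permCycles_eq_card_iff _ hcover, permLength, Nat.card_sum, Nat.card_fin]
  omega

theorem apply_eq_apply_of_isRight_ne (hβ : IsPairing β) (hτ : IsPairing τ)
    (hτt : IsTransverse τ)
    (hinj : ∀ x y, ¬ IsBumpEnd β x → ¬ IsBumpEnd β y → (τ * β).SameCycle x y → x = y)
    {x : Fin q ⊕ Fin q} (hx : (β x).isRight ≠ x.isRight) : τ x = β x := by
  have hleft : ∀ y, y.isRight = false → (β y).isRight = true → τ y = β y := fun y hy hby =>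
    hτ.mul_apply_eq_self_iff.mp <| hinj _ _
      (not_isBumpEnd_of_isRight_eq_false (by rw [isRight_mul_apply hτ hτt, hby]; rfl))
      (not_isBumpEnd_of_isRight_eq_false hy) (Perm.sameCycle_apply_left.mpr .rfl)
  cases hxr : x.isRight
  · exact hleft x hxr (by simpa [hxr] using hx)
  · have h := hleft (β x) (by simpa [hxr] using hx) (by rw [hβ.involutive]; exact hxr)
    rw [hβ.involutive, hτ.involutive.eq_iff] at h
    exact h.symm

theorem apply_apply_comm_of_isBumpEnd (hβ : IsPairing β) (hτ : IsPairing τ)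
    (hτt : IsTransverse τ)
    (hinj : ∀ x y, ¬ IsBumpEnd β x → ¬ IsBumpEnd β y → (τ * β).SameCycle x y → x = y)
    {x : Fin q ⊕ Fin q} (hx : IsBumpEnd β x) : τ (β x) = β (τ x) := by
  set σ := τ * β
  have hσx : (σ x).isRight = false := by rw [isRight_mul_apply hτ hτt, hx.2]; rfl
  have hσσx : IsBumpEnd β (σ (σ x)) := by
    by_contra h
    have hfix := σ.injective <| hinj _ _ h (not_isBumpEnd_of_isRight_eq_false hσx)
      (Perm.sameCycle_apply_left.mpr .rfl)
    rw [hfix, hx.1] at hσx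
    exact Bool.noConfusion hσx
  have hβσx : (β (σ x)).isRight = false := by
    rw [← hτ.involutive (β (σ x)), hτt.isRight_apply hτ]
    exact congrArg (! ·) hσσx.1
  have hτx : (τ x).isRight = false := by rw [hτt.isRight_apply hτ, hx.1]; rfl
  have hcyc : σ.SameCycle (β (σ x)) (τ x) := by
    have h1 : σ (β (σ x)) = β x := by
      simp only [σ, Perm.mul_apply, hβ.involutive _, hτ.involutive _]
    have h2 : σ (β x) = τ x := by simp only [σ, Perm.mul_apply, hβ.involutive _]
    rw [← Perm.sameCycle_apply_left, h1, ← h2, Perm.sameCycle_apply_right]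
  exact hβ.involutive.eq_iff.mp <| hinj _ _ (not_isBumpEnd_of_isRight_eq_false hβσx)
    (not_isBumpEnd_of_isRight_eq_false hτx) hcyc

theorem isBumpEnd_mul_apply (hτ : IsPairing τ) (hτt : IsTransverse τ)
    (hcross : ∀ x, (β x).isRight ≠ x.isRight → τ x = β x)
    {x : Fin q ⊕ Fin q} (hx : x.isRight = false) (hbx : (β x).isRight = false) :
    IsBumpEnd β ((τ * β) x) := by
  have hσx : ((τ * β) x).isRight = true := by rw [isRight_mul_apply hτ hτt, hbx]; rfl
  refine ⟨hσx, ?_⟩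
  by_contra h
  have hfix := (τ * β).injective <| hτ.mul_apply_eq_self_iff.mpr <|
    hcross _ (by rw [hσx]; exact h)
  rw [hfix, hx] at hσx
  exact Bool.noConfusion hσx

theorem involutive_mul_of_forall (hβ : IsPairing β) (hτ : IsPairing τ) (hτt : IsTransverse τ)
    (hcross : ∀ x, (β x).isRight ≠ x.isRight → τ x = β x)
    (hcomm : ∀ x, x.isRight → (β x).isRight → τ (β x) = β (τ x)) :
    Function.Involutive (τ * β) := by
  have hfix : ∀ x, (β x).isRight ≠ x.isRight → (τ * β) x = x := fun x hx =>
    hτ.mul_apply_eq_self_iff.mpr (hcross x hx)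
  have hbump : ∀ x, IsBumpEnd β x → (τ * β) ((τ * β) x) = x := fun x hx => by
    simp only [Perm.mul_apply]
    rw [hcomm x hx.1 hx.2, hβ.involutive, hτ.involutive]
  intro x
  cases hxr : x.isRight <;> cases hbxr : (β x).isRight
  · exact (τ * β).injective (hbump _ (isBumpEnd_mul_apply hτ hτt hcross hxr hbxr))
  · rw [hfix x (by simp [hxr, hbxr]), hfix x (by simp [hxr, hbxr])]
  · rw [hfix x (by simp [hxr, hbxr]), hfix x (by simp [hxr, hbxr])]
  · exact hbump x ⟨hxr, hbxr⟩

theorem eq_of_sameCycle_mul (hβ : IsPairing β) (hτ : IsPairing τ) (hτt : IsTransverse τ)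
    (hcross : ∀ x, (β x).isRight ≠ x.isRight → τ x = β x)
    (hcomm : ∀ x, x.isRight → (β x).isRight → τ (β x) = β (τ x))
    {x y : Fin q ⊕ Fin q} (hx : ¬ IsBumpEnd β x) (hy : ¬ IsBumpEnd β y)
    (hxy : (τ * β).SameCycle x y) : x = y := by
  rcases hxy.eq_or_eq_apply_of_involutive (involutive_mul_of_forall hβ hτ hτt hcross hcomm)
    with rfl | rfl
  · rfl
  by_cases hcr : (β x).isRight ≠ x.isRight
  · exact (hτ.mul_apply_eq_self_iff.mpr (hcross x hcr)).symm
  cases hxr : x.isRight <;> cases hbxr : (β x).isRight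
  · exact absurd (isBumpEnd_mul_apply hτ hτt hcross hxr hbxr) hy
  · simp [hxr, hbxr] at hcr
  · simp [hxr, hbxr] at hcr
  · exact absurd ⟨hxr, hbxr⟩ hx

end Bumps

theorem stmt7_general (q : ℕ) (β τ : Equiv.Perm (Fin q ⊕ Fin q))
    (hβ : IsPairing β) (hτ : IsPairing τ) (hτt : IsTransverse τ) :
    permLength (τ * β) = bR β ↔
      ((∀ x : Fin q ⊕ Fin q, (β x).isRight ≠ x.isRight → τ x = β x) ∧
       (∀ x : Fin q ⊕ Fin q, x.isRight → (β x).isRight → τ (β x) = β (τ x))) := by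
  rw [permLength_mul_eq_bR_iff hτ hτt]
  constructor
  · intro hinj
    exact ⟨fun x => apply_eq_apply_of_isRight_ne hβ hτ hτt hinj,
      fun x hx hbx => apply_apply_comm_of_isBumpEnd hβ hτ hτt hinj ⟨hx, hbx⟩⟩
  · rintro ⟨hcross, hcomm⟩ x y hx hy
    exact eq_of_sameCycle_mul hβ hτ hτt hcross hcomm hx hy

theorem stmt7 (q : ℕ) (hq : 1 ≤ q) (β τ : Equiv.Perm (Fin q ⊕ Fin q))
    (hβ : IsPairing β) (hτ : IsPairing τ) (hτt : IsTransverse τ) :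
    permLength (τ * β) = bR β ↔
      ((∀ x : Fin q ⊕ Fin q, (β x).isRight ≠ x.isRight → τ x = β x) ∧
       (∀ x : Fin q ⊕ Fin q, x.isRight → (β x).isRight → τ (β x) = β (τ x))) :=
  stmt7_general q β τ hβ hτ hτt
end

section
/- Let q ≥ 1, X = Fin q ⊕ Fin q, δ the transverse pairing with δ (inl i) = inr i, and let α, β be pairings of X. Then the equality |δ∘α| + |α∘β| = b_R(β) holds if and only if both of the following hold: (a) for every i : Fin q, either β (inl i) = inr i (a horizontal wire), or there exists j ≠ i with β (inl i) = inl j and β (inr i) = inr j (a symmetrical bump); and (b) for every i : Fin q, either α (inl i) = inr i, or there exists j ≠ i with β (inl i) = inl j, β (inr i) = inr j, α (inl i) = inl j and α (inr i) = inr j (α consists of horizontal wires and a subset of the symmetrical bumps of β). -/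
/-- The transverse pairing `δ` with `δ (inl i) = inr i`. -/
def deltaPerm (q : ℕ) : Equiv.Perm (Fin q ⊕ Fin q) :=
  Equiv.sumComm (Fin q) (Fin q)

/-!
For a permutation `π` of a finite set, weight the fixed points by `2` and the other points by `1`.
Every cycle then weighs at least `2`, with equality iff it has at most two points, so
`card X ≤ 2 |π| + #fix π`, with equality iff `π` is an involution.

For pairings `α, β`, the fixed points of `δ α` are the `x` with `α x = δ x`, those of `α β` the `x`
with `β x = α x`, and `2 b_R(β)` counts the `x` that `β` keeps on their side. No `x` satisfies all
three conditions (then `β x = δ x` lies on the other side), so summing gives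
`b_R(β) ≤ |δ α| + |α β|`, with equality iff `δ α` and `α β` are involutions (`α` commutes with `δ`
and with `β`) and every `x` satisfies exactly two of the conditions. A case analysis on the two
sides identifies these local conditions with (a) and (b).
-/

open Finset Equiv Function MulAction Sum

section CycleCount

theorem orbitRel_zpowers_mk_eq_mk_iff {X : Type*} (π : Perm X) {x y : X} :
    (Quotient.mk'' x : orbitRel.Quotient (Subgroup.zpowers π) X) = Quotient.mk'' y ↔
      π.SameCycle y x := by
  rw [Quotient.eq'', orbitRel_apply, mem_orbit_iff, Subgroup.exists_zpowers]
  rfl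

theorem Equiv.Perm.SameCycle.apply_apply_eq_self_iff {X : Type*} {π : Perm X} {x y : X}
    (h : π.SameCycle x y) : π (π x) = x ↔ π (π y) = y := by
  obtain ⟨i, rfl⟩ := h
  have hcomm : ∀ z, π ((π ^ i) z) = (π ^ i) (π z) := fun z => by
    simpa only [zpow_one] using π.zpow_apply_comm 1 i
  rw [hcomm, hcomm, (π ^ i).injective.eq_iff]

theorem two_mul_permCycles_eq_sum {X : Type*} (π : Perm X)
    [Fintype (orbitRel.Quotient (Subgroup.zpowers π) X)] :
    2 * permCycles π = ∑ _c : orbitRel.Quotient (Subgroup.zpowers π) X, 2 := by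
  rw [permCycles, Nat.card_eq_fintype_card, sum_const, card_univ, smul_eq_mul, mul_comm]

variable {X : Type*} [Fintype X] [DecidableEq X] (π : Perm X)

theorem sum_sameCycle_eq_card_of_apply_ne {y : X} (hy : π y ≠ y) :
    ∑ x with π.SameCycle y x, (if π x = x then 2 else 1) = #{x | π.SameCycle y x} := by
  rw [card_eq_sum_ones]
  refine sum_congr rfl fun x hx => if_neg ?_
  rwa [← (mem_filter.mp hx).2.apply_eq_self_iff]

theorem pair_subset_sameCycle (y : X) : {y, π y} ⊆ ({x | π.SameCycle y x} : Finset X) := by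
  intro x hx
  rcases mem_insert.mp hx with rfl | hx
  · simp [Perm.SameCycle.rfl]
  · simp [mem_singleton.mp hx, Perm.sameCycle_apply_right, Perm.SameCycle.rfl]

theorem two_le_sum_sameCycle (y : X) :
    2 ≤ ∑ x with π.SameCycle y x, (if π x = x then 2 else 1) := by
  by_cases hy : π y = y
  · have hmem : y ∈ ({x | π.SameCycle y x} : Finset X) := by simp [Perm.SameCycle.rfl]
    simpa [hy] using single_le_sum (f := fun x => if π x = x then 2 else 1)
      (fun _ _ => Nat.zero_le _) hmem
  · rw [sum_sameCycle_eq_card_of_apply_ne π hy, ← card_pair (Ne.symm hy)]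
    exact card_le_card (pair_subset_sameCycle π y)

theorem sum_sameCycle_eq_two_iff (y : X) :
    ∑ x with π.SameCycle y x, (if π x = x then 2 else 1) = 2 ↔ π (π y) = y := by
  rcases eq_or_ne (π y) y with hy | hy
  · have hcycle : ({x | π.SameCycle y x} : Finset X) = {y} := by
      ext x
      simp only [mem_filter, mem_univ, true_and, mem_singleton]
      exact ⟨fun h => (h.eq_of_left hy).symm, fun h => h ▸ Perm.SameCycle.rfl⟩
    simp [hcycle, hy]
  · have hpair_le := card_le_card (pair_subset_sameCycle π y)
    rw [card_pair (Ne.symm hy)] at hpair_le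
    rw [sum_sameCycle_eq_card_of_apply_ne π hy]
    constructor
    · intro h2
      have hpair := eq_of_subset_of_card_le (pair_subset_sameCycle π y)
        (by rw [h2, card_pair (Ne.symm hy)])
      have hmem : π (π y) ∈ ({x | π.SameCycle y x} : Finset X) := by
        simp [Perm.sameCycle_apply_right, Perm.SameCycle.rfl]
      rw [← hpair, mem_insert, mem_singleton] at hmem
      exact hmem.resolve_right fun h => hy (π.injective h)
    · intro hinv
      refine le_antisymm ?_ hpair_le
      calc #{x | π.SameCycle y x} ≤ #({y, π y} : Finset X) := card_le_card fun x hx => by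
            obtain ⟨i, rfl⟩ := (mem_filter.mp hx).2
            rcases Perm.zpow_apply_eq_of_apply_apply_eq_self hinv i with h | h <;> simp [h]
        _ ≤ 2 := card_le_two

theorem card_add_card_fixed_eq_sum_orbits
    [Fintype (orbitRel.Quotient (Subgroup.zpowers π) X)]
    [DecidableEq (orbitRel.Quotient (Subgroup.zpowers π) X)] :
    Fintype.card X + #{x | π x = x} =
      ∑ c : orbitRel.Quotient (Subgroup.zpowers π) X,
        ∑ x with π.SameCycle c.out x, (if π x = x then 2 else 1) := by
  have hweight : Fintype.card X + #{x | π x = x} = ∑ x, (if π x = x then 2 else 1) := by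
    rw [card_filter, ← card_univ, card_eq_sum_ones, ← sum_add_distrib]
    exact sum_congr rfl fun x _ => by split_ifs <;> rfl
  rw [hweight, ← sum_fiberwise univ
    (fun x => (Quotient.mk'' x : orbitRel.Quotient (Subgroup.zpowers π) X))]
  refine sum_congr rfl fun c _ => sum_congr (filter_congr fun x _ => ?_) fun _ _ => rfl
  conv_lhs => rw [← c.out_eq']
  exact orbitRel_zpowers_mk_eq_mk_iff π

theorem two_mul_permCycles_le : 2 * permCycles π ≤ Fintype.card X + #{x | π x = x} := by
  classical
  let _ := Fintype.ofFinite (orbitRel.Quotient (Subgroup.zpowers π) X)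
  rw [two_mul_permCycles_eq_sum π, card_add_card_fixed_eq_sum_orbits]
  exact sum_le_sum fun c _ => two_le_sum_sameCycle π c.out

theorem two_mul_permCycles_eq_iff :
    2 * permCycles π = Fintype.card X + #{x | π x = x} ↔ π * π = 1 := by
  classical
  let _ := Fintype.ofFinite (orbitRel.Quotient (Subgroup.zpowers π) X)
  rw [two_mul_permCycles_eq_sum π, card_add_card_fixed_eq_sum_orbits,
    sum_eq_sum_iff_of_le fun c _ => two_le_sum_sameCycle π c.out, Perm.ext_iff]
  simp only [mem_univ, forall_const, eq_comm (a := 2), sum_sameCycle_eq_two_iff, Perm.mul_apply,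
    Perm.one_apply]
  refine ⟨fun h x => ?_, fun h c => h c.out⟩
  have hx : π.SameCycle x (Quotient.mk'' x : orbitRel.Quotient (Subgroup.zpowers π) X).out :=
    (orbitRel_zpowers_mk_eq_mk_iff π).mp (Quotient.out_eq' _)
  exact hx.apply_apply_eq_self_iff.mpr (h _)

theorem card_le_two_mul_permLength_add : Fintype.card X ≤ 2 * permLength π + #{x | π x = x} := by
  have hcycles := two_mul_permCycles_le π
  have hfix := card_filter_le univ fun x => π x = x
  rw [card_univ] at hfix
  rw [permLength, Nat.card_eq_fintype_card]
  omega

theorem card_eq_two_mul_permLength_add_iff :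
    Fintype.card X = 2 * permLength π + #{x | π x = x} ↔ π * π = 1 := by
  have hcycles := two_mul_permCycles_le π
  have hfix := card_filter_le univ fun x => π x = x
  rw [card_univ] at hfix
  rw [← two_mul_permCycles_eq_iff, permLength, Nat.card_eq_fintype_card]
  omega

end CycleCount

theorem IsPairing.involutive_s11 {X : Type*} {α : Perm X} (hα : IsPairing α) : Involutive α :=
  fun x => by simpa using Perm.congr_fun hα.1 x

theorem mul_mul_self_eq_one_iff_commute {X : Type*} {σ τ : Perm X} (hσ : Involutive σ)
    (hτ : Involutive τ) : σ * τ * (σ * τ) = 1 ↔ Function.Commute τ σ := by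
  constructor
  · intro h x
    have hx := Perm.congr_fun h (τ x)
    simp only [Perm.mul_apply, hτ x, Perm.one_apply] at hx
    rw [← hx, hσ]
  · intro h
    ext x
    simp only [Perm.mul_apply, Perm.one_apply]
    rw [← h x, hτ, hσ]

theorem mul_apply_eq_self_iff_of_involutive {X : Type*} {σ τ : Perm X} (hσ : Involutive σ)
    (x : X) : (σ * τ) x = x ↔ τ x = σ x := by
  rw [Perm.mul_apply, hσ.eq_iff]

section Wiring

variable {q : ℕ}

@[simp] theorem deltaPerm_inl (i : Fin q) : deltaPerm q (inl i) = inr i := rfl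
@[simp] theorem deltaPerm_inr (i : Fin q) : deltaPerm q (inr i) = inl i := rfl

theorem deltaPerm_involutive : Involutive (deltaPerm q) := by
  rintro (i | i) <;> rfl

theorem card_isLeft_eq_isLeft_eq_two_mul_bR (β : Perm (Fin q ⊕ Fin q)) :
    #{x | (β x).isLeft = x.isLeft} = 2 * bR β := by
  have hinl : ∑ i, (if (β (inl i)).isLeft = (inl i : Fin q ⊕ Fin q).isLeft then 1 else 0) +
      ∑ i, (if (β (inl i)).isRight then 1 else 0) = q := by
    rw [← sum_add_distrib]
    simpa using sum_congr rfl fun i (_ : i ∈ univ) => show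
      (if (β (inl i)).isLeft = (inl i : Fin q ⊕ Fin q).isLeft then 1 else 0) +
        (if (β (inl i)).isRight then 1 else 0) = 1 by
      cases β (inl i) <;> rfl
  have hright : ∑ i, (if (β (inl i)).isRight then 1 else 0) +
      ∑ i, (if (β (inr i)).isRight then 1 else 0) = q := by
    have h := Equiv.sum_comp β fun y => if y.isRight then 1 else 0
    simp only [Fintype.sum_sum_type, isRight_inl, isRight_inr, Bool.false_eq_true, if_false,
      if_true, sum_const_zero, zero_add, sum_const, card_univ, Fintype.card_fin, smul_eq_mul,
      mul_one] at h
    exact h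
  have hinr : ∑ i, (if (β (inr i)).isLeft = (inr i : Fin q ⊕ Fin q).isLeft then 1 else 0) =
      ∑ i, (if (β (inr i)).isRight then 1 else 0) :=
    sum_congr rfl fun i _ => by cases β (inr i) <;> rfl
  rw [bR, card_filter, card_filter, Fintype.sum_sum_type, hinr]
  omega

variable (α β : Perm (Fin q ⊕ Fin q))

/-- Exactly two of `α x = δ x`, `β x = α x` and "`β x` lies on the side of `x`" hold, in factored
form. -/
def IsTightAt (x : Fin q ⊕ Fin q) : Prop :=
  (β x = deltaPerm q x ∨ (β x).isLeft = x.isLeft) ∧ (α x = deltaPerm q x ∨ β x = α x)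

theorem ite_add_ite_add_ite_le_two (x : Fin q ⊕ Fin q) :
    (if α x = deltaPerm q x then 1 else 0) + (if β x = α x then 1 else 0) +
      (if (β x).isLeft = x.isLeft then 1 else 0) ≤ 2 := by
  rcases x with i | i <;> split_ifs <;> simp_all

theorem ite_add_ite_add_ite_eq_two_iff (x : Fin q ⊕ Fin q) :
    (if α x = deltaPerm q x then 1 else 0) + (if β x = α x then 1 else 0) +
      (if (β x).isLeft = x.isLeft then 1 else 0) = 2 ↔ IsTightAt α β x := by
  unfold IsTightAt
  rcases x with i | i <;> split_ifs <;> simp_all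

theorem card_add_card_add_card_eq_sum :
    #{x | α x = deltaPerm q x} + #{x | β x = α x} + #{x | (β x).isLeft = x.isLeft} =
      ∑ x, ((if α x = deltaPerm q x then 1 else 0) + (if β x = α x then 1 else 0) +
        (if (β x).isLeft = x.isLeft then 1 else 0)) := by
  simp only [card_filter, sum_add_distrib]

theorem two_mul_card_eq_sum_two : 2 * Fintype.card (Fin q ⊕ Fin q) = ∑ _x : Fin q ⊕ Fin q, 2 := by
  rw [sum_const, card_univ, smul_eq_mul, mul_comm]

theorem card_add_card_add_card_le :
    #{x | α x = deltaPerm q x} + #{x | β x = α x} + #{x | (β x).isLeft = x.isLeft} ≤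
      2 * Fintype.card (Fin q ⊕ Fin q) := by
  rw [card_add_card_add_card_eq_sum, two_mul_card_eq_sum_two]
  exact sum_le_sum fun x _ => ite_add_ite_add_ite_le_two α β x

theorem card_add_card_add_card_eq_iff :
    #{x | α x = deltaPerm q x} + #{x | β x = α x} + #{x | (β x).isLeft = x.isLeft} =
      2 * Fintype.card (Fin q ⊕ Fin q) ↔ ∀ x, IsTightAt α β x := by
  rw [card_add_card_add_card_eq_sum, two_mul_card_eq_sum_two,
    sum_eq_sum_iff_of_le fun x _ => ite_add_ite_add_ite_le_two α β x]
  simp only [mem_univ, forall_const, ite_add_ite_add_ite_eq_two_iff]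

def HasOnlyWiresAndSymmetricBumps : Prop :=
  ∀ i, β (inl i) = inr i ∨ ∃ j, j ≠ i ∧ β (inl i) = inl j ∧ β (inr i) = inr j

def HasOnlyWiresAndBumpsOf : Prop :=
  ∀ i, α (inl i) = inr i ∨ ∃ j, j ≠ i ∧ β (inl i) = inl j ∧ β (inr i) = inr j ∧
    α (inl i) = inl j ∧ α (inr i) = inr j

variable {α β}

theorem hasOnlyWiresAndSymmetricBumps_of_isTightAt (hα : Involutive α) (hβ : Involutive β)
    (hβfix : ∀ x, β x ≠ x) (hαδ : Function.Commute α (deltaPerm q))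
    (hβα : Function.Commute β α) (htight : ∀ x, IsTightAt α β x) :
    HasOnlyWiresAndSymmetricBumps β := by
  intro i
  rcases (htight (inl i)).1 with hβi | hβi
  · exact Or.inl hβi
  obtain ⟨j, hj⟩ := isLeft_iff.mp hβi
  have hβj : β (inl j) = inl i := by rw [← hj, hβ]
  refine Or.inr ⟨j, fun hji => hβfix _ (hji ▸ hj), hj, ?_⟩
  rcases (htight (inl i)).2 with hαi | hαi
  · have hαj : α (inl j) = inr j := by
      rcases (htight (inl j)).2 with h | h
      · exact h
      · rw [hβj] at h
        have h' : α (inl i) = inl j := by rw [h, hα]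
        simp [hαi] at h'
    calc β (inr i) = β (α (inl i)) := by rw [hαi]; rfl
      _ = α (inl j) := by rw [hβα, hj]
      _ = inr j := hαj
  · have hαRi : α (inr i) = inr j := by
      rw [← deltaPerm_inl, hαδ, ← hαi, hj, deltaPerm_inl]
    rcases (htight (inr i)).2 with h | h
    · simp [hαRi] at h
    · rw [h, hαRi]

theorem hasOnlyWiresAndBumpsOf_of_isTightAt (hαδ : Function.Commute α (deltaPerm q))
    (hβ : HasOnlyWiresAndSymmetricBumps β) (htight : ∀ x, IsTightAt α β x) :
    HasOnlyWiresAndBumpsOf α β := by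
  intro i
  rcases (htight (inl i)).2 with hαi | hαi
  · exact Or.inl hαi
  rcases hβ i with hβi | ⟨j, hji, hβLi, hβRi⟩
  · exact Or.inl (hαi ▸ hβi)
  · refine Or.inr ⟨j, hji, hβLi, hβRi, hαi ▸ hβLi, ?_⟩
    rw [← deltaPerm_inl, hαδ, ← hαi, hβLi, deltaPerm_inl]

theorem commute_deltaPerm_of_apply_inr {σ : Perm (Fin q ⊕ Fin q)}
    (h : ∀ i, σ (inr i) = deltaPerm q (σ (inl i))) : Function.Commute σ (deltaPerm q) := by
  rintro (i | i)
  · exact h i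
  · rw [deltaPerm_inr, h, deltaPerm_involutive]

theorem HasOnlyWiresAndSymmetricBumps.commute_deltaPerm (hβ : Involutive β)
    (h : HasOnlyWiresAndSymmetricBumps β) : Function.Commute β (deltaPerm q) := by
  refine commute_deltaPerm_of_apply_inr fun i => ?_
  rcases h i with hβi | ⟨j, -, hβLi, hβRi⟩
  · rw [hβi, deltaPerm_inr, ← hβi, hβ]
  · rw [hβLi, hβRi, deltaPerm_inl]

theorem HasOnlyWiresAndBumpsOf.commute_deltaPerm (hα : Involutive α)
    (h : HasOnlyWiresAndBumpsOf α β) : Function.Commute α (deltaPerm q) := by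
  refine commute_deltaPerm_of_apply_inr fun i => ?_
  rcases h i with hαi | ⟨j, -, -, -, hαLi, hαRi⟩
  · rw [hαi, deltaPerm_inr, ← hαi, hα]
  · rw [hαLi, hαRi, deltaPerm_inl]

theorem commute_of_commute_deltaPerm {σ τ : Perm (Fin q ⊕ Fin q)}
    (hσ : Function.Commute σ (deltaPerm q)) (hτ : Function.Commute τ (deltaPerm q))
    (h : ∀ i, σ (τ (inl i)) = τ (σ (inl i))) : Function.Commute σ τ := by
  rintro (i | i)
  · exact h i
  · rw [← deltaPerm_inl, hτ, hσ, h, hσ, hτ]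

theorem HasOnlyWiresAndBumpsOf.commute (hα : Involutive α) (hβ : Involutive β)
    (hβwires : HasOnlyWiresAndSymmetricBumps β) (h : HasOnlyWiresAndBumpsOf α β) :
    Function.Commute β α := by
  refine Function.Commute.symm <|
    commute_of_commute_deltaPerm (h.commute_deltaPerm hα) (hβwires.commute_deltaPerm hβ) fun i => ?_
  rcases h i with hαi | ⟨j, -, hβLi, -, hαLi, -⟩
  · have hαRi : α (inr i) = inl i := by rw [← hαi, hα]
    rcases hβwires i with hβi | ⟨j, -, hβLi, hβRi⟩
    · have hβRi : β (inr i) = inl i := by rw [← hβi, hβ]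
      rw [hβi, hαi, hαRi, hβRi]
    · have hαLj : α (inl j) = inr j := by
        rcases h j with hαj | ⟨k, -, hβLj, -, hαLj, -⟩
        · exact hαj
        · obtain rfl : i = k := inl_injective (by rw [← hβLj, ← hβLi, hβ])
          rw [← hαLj, hα] at hαi
          simp at hαi
      rw [hβLi, hαi, hαLj, hβRi]
  · have hαLj : α (inl j) = inl i := by rw [← hαLi, hα]
    have hβLj : β (inl j) = inl i := by rw [← hβLi, hβ]
    rw [hβLi, hαLi, hαLj, hβLj]

theorem isTightAt_of_hasOnlyWires (hα : Involutive α) (hβ : Involutive β)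
    (hβwires : HasOnlyWiresAndSymmetricBumps β) (h : HasOnlyWiresAndBumpsOf α β) :
    ∀ x, IsTightAt α β x := by
  rintro (i | i)
  · refine ⟨?_, ?_⟩
    · rcases hβwires i with hβi | ⟨j, -, hβLi, -⟩
      · exact Or.inl hβi
      · exact Or.inr (by simp [hβLi])
    · rcases h i with hαi | ⟨j, -, hβLi, -, hαLi, -⟩
      · exact Or.inl hαi
      · exact Or.inr (hβLi.trans hαLi.symm)
  · refine ⟨?_, ?_⟩
    · rcases hβwires i with hβi | ⟨j, -, -, hβRi⟩
      · exact Or.inl (by rw [deltaPerm_inr, ← hβi, hβ])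
      · exact Or.inr (by simp [hβRi])
    · rcases h i with hαi | ⟨j, -, -, hβRi, -, hαRi⟩
      · exact Or.inl (by rw [deltaPerm_inr, ← hαi, hα])
      · exact Or.inr (hβRi.trans hαRi.symm)

theorem commute_and_isTightAt_iff (hα : Involutive α) (hβ : Involutive β) (hβfix : ∀ x, β x ≠ x) :
    (Function.Commute α (deltaPerm q) ∧ Function.Commute β α ∧ ∀ x, IsTightAt α β x) ↔
      HasOnlyWiresAndSymmetricBumps β ∧ HasOnlyWiresAndBumpsOf α β := by
  constructor
  · rintro ⟨hαδ, hβα, htight⟩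
    have hβwires := hasOnlyWiresAndSymmetricBumps_of_isTightAt hα hβ hβfix hαδ hβα htight
    exact ⟨hβwires, hasOnlyWiresAndBumpsOf_of_isTightAt hαδ hβwires htight⟩
  · rintro ⟨hβwires, hαwires⟩
    exact ⟨hαwires.commute_deltaPerm hα, hαwires.commute hα hβ hβwires,
      isTightAt_of_hasOnlyWires hα hβ hβwires hαwires⟩

theorem permLength_add_permLength_eq_bR_iff (hα : Involutive α) (hβ : Involutive β) :
    permLength (deltaPerm q * α) + permLength (α * β) = bR β ↔
      Function.Commute α (deltaPerm q) ∧ Function.Commute β α ∧ ∀ x, IsTightAt α β x := by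
  have hfix₁ : #{x | (deltaPerm q * α) x = x} = #{x | α x = deltaPerm q x} := congrArg card
    (filter_congr fun x _ => mul_apply_eq_self_iff_of_involutive deltaPerm_involutive x)
  have hfix₂ : #{x | (α * β) x = x} = #{x | β x = α x} :=
    congrArg card (filter_congr fun x _ => mul_apply_eq_self_iff_of_involutive hα x)
  have h₁ := card_le_two_mul_permLength_add (deltaPerm q * α)
  have h₂ := card_le_two_mul_permLength_add (α * β)
  have h₃ := card_add_card_add_card_le α β
  have hbR := card_isLeft_eq_isLeft_eq_two_mul_bR β
  rw [← mul_mul_self_eq_one_iff_commute deltaPerm_involutive hα,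
    ← mul_mul_self_eq_one_iff_commute hα hβ, ← card_eq_two_mul_permLength_add_iff,
    ← card_eq_two_mul_permLength_add_iff, ← card_add_card_add_card_eq_iff]
  rw [hfix₁, hfix₂] at *
  omega

end Wiring

theorem stmt11_general (q : ℕ) (α β : Equiv.Perm (Fin q ⊕ Fin q))
    (hα : IsPairing α) (hβ : IsPairing β) :
    permLength (deltaPerm q * α) + permLength (α * β) = bR β ↔
      ((∀ i : Fin q, β (Sum.inl i) = Sum.inr i ∨
         ∃ j : Fin q, j ≠ i ∧ β (Sum.inl i) = Sum.inl j ∧ β (Sum.inr i) = Sum.inr j) ∧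
       (∀ i : Fin q, α (Sum.inl i) = Sum.inr i ∨
         ∃ j : Fin q, j ≠ i ∧ β (Sum.inl i) = Sum.inl j ∧ β (Sum.inr i) = Sum.inr j ∧
           α (Sum.inl i) = Sum.inl j ∧ α (Sum.inr i) = Sum.inr j)) := by
  rw [permLength_add_permLength_eq_bR_iff hα.involutive_s11 hβ.involutive_s11]
  exact commute_and_isTightAt_iff hα.involutive_s11 hβ.involutive_s11 hβ.2

theorem stmt11 (q : ℕ) (hq : 1 ≤ q) (α β : Equiv.Perm (Fin q ⊕ Fin q))
    (hα : IsPairing α) (hβ : IsPairing β) :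
    permLength (deltaPerm q * α) + permLength (α * β) = bR β ↔
      ((∀ i : Fin q, β (Sum.inl i) = Sum.inr i ∨
         ∃ j : Fin q, j ≠ i ∧ β (Sum.inl i) = Sum.inl j ∧ β (Sum.inr i) = Sum.inr j) ∧
       (∀ i : Fin q, α (Sum.inl i) = Sum.inr i ∨
         ∃ j : Fin q, j ≠ i ∧ β (Sum.inl i) = Sum.inl j ∧ β (Sum.inr i) = Sum.inr j ∧
           α (Sum.inl i) = Sum.inl j ∧ α (Sum.inr i) = Sum.inr j)) :=
  stmt11_general q α β hα hβ
end
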